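/- arXiv:2506.10887 — 2 statements merged into one kernel-verified Lean document; each statement's English description precedes it below -/
import Mathlib

section
/- Let M̄ ∈ R^{m×n}, let U ∈ R^{m×r}, V ∈ R^{n×r} have orthonormal columns, and suppose there exists a vector η ∈ R^m with η^T U = 0 but η^T M̄ ≠ 0. Then the nuclear norm of M̄ is strictly greater than trace(U^T M̄ V). -/
open scoped BigOperators Matrix

/-- Squared Frobenius norm of a real matrix. -/
noncomputable def frobSq {m n : ℕ} (A : Matrix (Fin m) (Fin n) ℝ) : ℝ :=
  ∑ i, ∑ j, (A i j) ^ 2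

/-- The nuclear norm of a real matrix: the sum of its singular values, i.e. the
sum of the square roots of the eigenvalues of `Aᵀ * A`. -/
noncomputable def nuclearNorm {m n : ℕ} (A : Matrix (Fin m) (Fin n) ℝ) : ℝ :=
  ∑ j, Real.sqrt ((Matrix.isHermitian_conjTranspose_mul_self A).eigenvalues j)

/-!
Let `v_j` be an orthonormal eigenbasis of `MᵀM`, so that `‖M v_j‖ = σ_j` and `‖M‖_* = ∑ σ_j`.
For the contraction `W = U Vᵀ` we have `trace (Uᵀ M V) = trace (Wᵀ M) = ∑ ⟪W v_j, M v_j⟫`,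
and each term is at most `‖M v_j‖` by Cauchy–Schwarz. Every `W v_j` is orthogonal to `η`,
while `ηᵀ M ≠ 0` means that some `M v_j` is not; for that `j` Cauchy–Schwarz is strict.
-/

open scoped InnerProductSpace
open Matrix WithLp

section RealInner

variable {F : Type*} [NormedAddCommGroup F] [InnerProductSpace ℝ F]

theorem real_inner_le_norm_of_norm_le_one {w : F} (hw : ‖w‖ ≤ 1) (y : F) : ⟪w, y⟫_ℝ ≤ ‖y‖ :=
  (real_inner_le_norm w y).trans (mul_le_of_le_one_left (norm_nonneg y) hw)

theorem real_inner_lt_norm_of_inner_ne_zero {w y η : F} (hw : ‖w‖ ≤ 1) (hηw : ⟪η, w⟫_ℝ = 0)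
    (hηy : ⟪η, y⟫_ℝ ≠ 0) : ⟪w, y⟫_ℝ < ‖y‖ := by
  refine (real_inner_le_norm_of_norm_le_one hw y).lt_of_ne fun heq => hηy ?_
  have hy : 0 < ‖y‖ := norm_pos_iff.2 (by rintro rfl; simp at hηy)
  have hw1 : ‖w‖ = 1 := le_antisymm hw (by nlinarith [real_inner_le_norm w y])
  -- equality in Cauchy–Schwarz makes `y` a multiple of `w`
  have hyw : y = ‖y‖ • w := by
    have h := (inner_eq_norm_mul_iff_real.1 (by rw [heq, hw1, one_mul])).symm
    rwa [hw1, one_smul] at h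
  rw [hyw, real_inner_smul_right, hηw, mul_zero]

theorem sum_real_inner_lt_sum_norm {ι : Type*} [Fintype ι] {w y : ι → F} {η : F}
    (hw : ∀ i, ‖w i‖ ≤ 1) (hηw : ∀ i, ⟪η, w i⟫_ℝ = 0) (hηy : ∃ i, ⟪η, y i⟫_ℝ ≠ 0) :
    ∑ i, ⟪w i, y i⟫_ℝ < ∑ i, ‖y i‖ := by
  obtain ⟨i, hi⟩ := hηy
  exact Finset.sum_lt_sum (fun j _ => real_inner_le_norm_of_norm_le_one (hw j) (y j))
    ⟨i, Finset.mem_univ i, real_inner_lt_norm_of_inner_ne_zero (hw i) (hηw i) hi⟩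

end RealInner

theorem OrthonormalBasis.exists_inner_ne_zero {𝕜 E ι : Type*} [RCLike 𝕜] [NormedAddCommGroup E]
    [InnerProductSpace 𝕜 E] [Fintype ι] (b : OrthonormalBasis ι 𝕜 E) {x : E} (hx : x ≠ 0) :
    ∃ i, ⟪b i, x⟫_𝕜 ≠ 0 := by
  by_contra! h
  exact hx (InnerProductSpace.ext_inner_left_basis b.toBasis fun i => by simpa using h i)

theorem Matrix.toEuclideanLin_transpose_toLp {𝕜 m n : Type*} [RCLike 𝕜] [Fintype m]
    [DecidableEq m] (A : Matrix m n 𝕜) (x : m → 𝕜) :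
    toEuclideanLin Aᵀ (toLp 2 x) = toLp 2 (x ᵥ* A) := by
  rw [toLpLin_apply, mulVec_transpose]

namespace Matrix

variable {𝕜 : Type*} [RCLike 𝕜] {m n : Type*} [Fintype m] [Fintype n] [DecidableEq m]
  [DecidableEq n]

theorem inner_toEuclideanLin_right (A : Matrix m n 𝕜) (x : EuclideanSpace 𝕜 m)
    (y : EuclideanSpace 𝕜 n) : ⟪x, toEuclideanLin A y⟫_𝕜 = ⟪toEuclideanLin Aᴴ x, y⟫_𝕜 := by
  rw [toEuclideanLin_conjTranspose_eq_adjoint, LinearMap.adjoint_inner_left]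

theorem trace_conjTranspose_mul_eq_sum_inner (A B : Matrix m n 𝕜)
    (b : OrthonormalBasis n 𝕜 (EuclideanSpace 𝕜 n)) :
    trace (Aᴴ * B) = ∑ i, ⟪toEuclideanLin A (b i), toEuclideanLin B (b i)⟫_𝕜 := by
  rw [← trace_toLin_eq (Aᴴ * B) (PiLp.basisFun 2 𝕜 n)]
  change LinearMap.trace 𝕜 _ (toEuclideanLin (Aᴴ * B)) = _
  simp only [LinearMap.trace_eq_sum_inner _ b, toLpLin_mul_same, LinearMap.comp_apply,
    inner_toEuclideanLin_right, conjTranspose_conjTranspose]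

theorem norm_toEuclideanLin_eq_of_conjTranspose_mul_self_eq_one {A : Matrix m n 𝕜}
    (hA : Aᴴ * A = 1) (x : EuclideanSpace 𝕜 n) : ‖toEuclideanLin A x‖ = ‖x‖ := by
  refine (LinearMap.norm_map_iff_inner_map_map (toEuclideanLin A)).2 (fun x y => ?_) x
  rw [inner_toEuclideanLin_right, ← LinearMap.comp_apply, ← toLpLin_mul_same, hA, toLpLin_one,
    LinearMap.id_apply]

theorem norm_toEuclideanLin_conjTranspose_le_of_conjTranspose_mul_self_eq_one
    {A : Matrix m n 𝕜} (hA : Aᴴ * A = 1) (x : EuclideanSpace 𝕜 m) :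
    ‖toEuclideanLin Aᴴ x‖ ≤ ‖x‖ := by
  have h : ‖toEuclideanLin Aᴴ x‖ ^ 2 ≤ ‖x‖ * ‖toEuclideanLin Aᴴ x‖ :=
    calc ‖toEuclideanLin Aᴴ x‖ ^ 2
        = RCLike.re ⟪x, toEuclideanLin A (toEuclideanLin Aᴴ x)⟫_𝕜 := by
          rw [inner_toEuclideanLin_right, inner_self_eq_norm_sq]
      _ ≤ ‖x‖ * ‖toEuclideanLin A (toEuclideanLin Aᴴ x)‖ := re_inner_le_norm _ _
      _ = ‖x‖ * ‖toEuclideanLin Aᴴ x‖ := by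
          rw [norm_toEuclideanLin_eq_of_conjTranspose_mul_self_eq_one hA]
  nlinarith [norm_nonneg x, norm_nonneg (toEuclideanLin Aᴴ x)]

theorem norm_toEuclideanLin_eigenvectorBasis (A : Matrix m n 𝕜) (j : n) :
    ‖toEuclideanLin A ((isHermitian_conjTranspose_mul_self A).eigenvectorBasis j)‖ =
      √((isHermitian_conjTranspose_mul_self A).eigenvalues j) := by
  set hAA := isHermitian_conjTranspose_mul_self A
  set v := hAA.eigenvectorBasis j
  have hv : toEuclideanLin Aᴴ (toEuclideanLin A v) = hAA.eigenvalues j • v := by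
    rw [← LinearMap.comp_apply, ← toLpLin_mul_same, toLpLin_apply, hAA.mulVec_eigenvectorBasis]
    rfl
  have hsq : ‖toEuclideanLin A v‖ ^ 2 = hAA.eigenvalues j := by
    rw [← inner_self_eq_norm_sq (𝕜 := 𝕜), inner_toEuclideanLin_right, hv,
      RCLike.real_smul_eq_coe_smul (K := 𝕜), inner_smul_real_left,
      inner_self_eq_one_of_norm_eq_one (hAA.eigenvectorBasis.orthonormal.1 j), RCLike.smul_re,
      RCLike.one_re, mul_one]
  rw [← hsq, Real.sqrt_sq (norm_nonneg _)]

end Matrix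

theorem nuclearNorm_eq_sum_norm {m n : ℕ} (A : Matrix (Fin m) (Fin n) ℝ) :
    nuclearNorm A =
      ∑ j, ‖toEuclideanLin A ((isHermitian_conjTranspose_mul_self A).eigenvectorBasis j)‖ := by
  simp only [nuclearNorm, norm_toEuclideanLin_eigenvectorBasis]

/-- Strict nuclear norm lower bound: if moreover some `η` is orthogonal to the columns
of `U` but `ηᵀ M ≠ 0`, then `trace (Uᵀ M V) < ‖M‖_⋆`. -/
theorem trace_lt_nuclearNorm {m n r : ℕ} (M : Matrix (Fin m) (Fin n) ℝ)
    (U : Matrix (Fin m) (Fin r) ℝ) (V : Matrix (Fin n) (Fin r) ℝ)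
    (hU : Uᵀ * U = 1) (hV : Vᵀ * V = 1)
    (η : Fin m → ℝ) (hηU : Matrix.vecMul η U = 0) (hηM : Matrix.vecMul η M ≠ 0) :
    Matrix.trace (Uᵀ * M * V) < nuclearNorm M := by
  simp only [← conjTranspose_eq_transpose_of_trivial] at hU hV ⊢
  set b := (isHermitian_conjTranspose_mul_self M).eigenvectorBasis
  have hUη : toEuclideanLin Uᴴ (toLp 2 η) = 0 := by
    rw [conjTranspose_eq_transpose_of_trivial, toEuclideanLin_transpose_toLp, hηU, toLp_zero]
  have hMη : toEuclideanLin Mᴴ (toLp 2 η) ≠ 0 := by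
    rwa [conjTranspose_eq_transpose_of_trivial, toEuclideanLin_transpose_toLp, Ne, toLp_eq_zero]
  have hW (x) : ‖toEuclideanLin (U * Vᴴ) x‖ ≤ ‖x‖ := by
    rw [toLpLin_mul_same, LinearMap.comp_apply,
      norm_toEuclideanLin_eq_of_conjTranspose_mul_self_eq_one hU]
    exact norm_toEuclideanLin_conjTranspose_le_of_conjTranspose_mul_self_eq_one hV x
  have hηW (x) : ⟪toLp 2 η, toEuclideanLin (U * Vᴴ) x⟫_ℝ = 0 := by
    rw [toLpLin_mul_same, LinearMap.comp_apply, inner_toEuclideanLin_right, hUη, inner_zero_left]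
  obtain ⟨j, hj⟩ := b.exists_inner_ne_zero hMη
  have htrace : trace (Uᴴ * M * V) = trace ((U * Vᴴ)ᴴ * M) := by
    rw [conjTranspose_mul, conjTranspose_conjTranspose, trace_mul_comm, Matrix.mul_assoc]
  rw [htrace, trace_conjTranspose_mul_eq_sum_inner _ _ b, nuclearNorm_eq_sum_norm]
  refine sum_real_inner_lt_sum_norm (fun i => (hW (b i)).trans_eq (b.orthonormal.1 i))
    (fun i => hηW (b i)) ⟨j, ?_⟩
  rwa [inner_toEuclideanLin_right, real_inner_comm]
end

section
/- Let m_train, m_test be positive reals, and define for real variables p1, q1, f1, g1 the quantity S = m_train p1² + m_test f1² + m_train q1² + m_test g1² + 2√(m_train m_test)·|p1 g1 − f1 q1|, subject to constraints p1 ≥ 1, f1 ≥ 1, q1 ≥ 1, g1 ≥ 0. If m_test ≥ m_train, then the minimum of S is (√m_train + √m_test)². If m_test < m_train, the minimum of S is 2(m_train + m_test). -/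
open scoped BigOperators

/-- The scalar objective `S` from the nuclear-norm minimization. -/
noncomputable def Sobj (mtr mte p1 f1 q1 g1 : ℝ) : ℝ :=
  mtr * p1 ^ 2 + mte * f1 ^ 2 + mtr * q1 ^ 2 + mte * g1 ^ 2 +
    2 * Real.sqrt (mtr * mte) * |p1 * g1 - f1 * q1|

/-!
Write `m_train = a²`, `m_test = b²`. Since `|p g - f q| ≥ f q - p g`, the objective dominates
`(a p - b g)² + (a q + b f)² ≥ (a + b)²`, with equality at `p = f = q = 1`, `g = a / b` as soon as
`a ≤ b`. When `b < a`, the terms `a² q² + b² f²` already give `a² + b²`; the other half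
`a² p² + b² g² + 2 a b |p g - f q|` gives another `a² + b²`, either because `p g ≥ 1`
(then `a² (p² - 1) + b² (g² - 1) ≥ b² (p² + g² - 2) ≥ 0`) or because `p g < 1`
(then it is at least `(a p - b g)² + 2 a b ≥ (a - b)² + 2 a b`). Equality holds at `p = f = q = g = 1`.
-/

section

variable {a b p f q g : ℝ}

theorem Sobj_sq_sq (ha : 0 ≤ a) (hb : 0 ≤ b) :
    Sobj (a ^ 2) (b ^ 2) p f q g =
      a ^ 2 * p ^ 2 + b ^ 2 * f ^ 2 + a ^ 2 * q ^ 2 + b ^ 2 * g ^ 2 +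
        2 * (a * b) * |p * g - f * q| := by
  rw [Sobj, Real.sqrt_mul (sq_nonneg a), Real.sqrt_sq ha, Real.sqrt_sq hb]

theorem sq_add_sq_le_Sobj (ha : 0 ≤ a) (hb : 0 ≤ b) :
    (a * p - b * g) ^ 2 + (a * q + b * f) ^ 2 ≤ Sobj (a ^ 2) (b ^ 2) p f q g := by
  have h : f * q - p * g ≤ |p * g - f * q| := neg_sub (p * g) (f * q) ▸ neg_le_abs _
  rw [Sobj_sq_sq ha hb]
  nlinarith [mul_nonneg ha hb]

theorem Sobj_eq_sq_add_sq (ha : 0 ≤ a) (hb : 0 ≤ b) (h : p * g ≤ f * q) :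
    Sobj (a ^ 2) (b ^ 2) p f q g = (a * p - b * g) ^ 2 + (a * q + b * f) ^ 2 := by
  rw [Sobj_sq_sq ha hb, abs_of_nonpos (sub_nonpos.2 h)]
  ring

theorem add_sq_le_Sobj (ha : 0 ≤ a) (hb : 0 ≤ b) (hf : 1 ≤ f) (hq : 1 ≤ q) :
    (a + b) ^ 2 ≤ Sobj (a ^ 2) (b ^ 2) p f q g := by
  have hsum : a + b ≤ a * q + b * f := by nlinarith
  calc (a + b) ^ 2 ≤ (a * q + b * f) ^ 2 := pow_le_pow_left₀ (by positivity) hsum 2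
    _ ≤ (a * p - b * g) ^ 2 + (a * q + b * f) ^ 2 := le_add_of_nonneg_left (sq_nonneg _)
    _ ≤ Sobj (a ^ 2) (b ^ 2) p f q g := sq_add_sq_le_Sobj ha hb

theorem sq_add_sq_le_of_le_of_one_le_mul (hb : 0 ≤ b) (hba : b ≤ a) (hp : 1 ≤ p)
    (hg : 0 ≤ g) (hfq : 1 ≤ f * q) :
    a ^ 2 + b ^ 2 ≤ a ^ 2 * p ^ 2 + b ^ 2 * g ^ 2 + 2 * (a * b) * |p * g - f * q| := by
  have hab : 0 ≤ 2 * (a * b) := by have := hb.trans hba; positivity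
  rcases le_or_gt 1 (p * g) with hpg | hpg
  · have hsq : b ^ 2 ≤ a ^ 2 := pow_le_pow_left₀ hb hba 2
    have hp2 : 0 ≤ p ^ 2 - 1 := by nlinarith
    have hpg2 : 0 ≤ p ^ 2 + g ^ 2 - 2 := by nlinarith [sq_nonneg (p - g)]
    nlinarith [mul_le_mul_of_nonneg_right hsq hp2, mul_nonneg (sq_nonneg b) hpg2,
      mul_nonneg hab (abs_nonneg (p * g - f * q))]
  · have hg1 : g ≤ 1 := by nlinarith
    have hdiff : a - b ≤ a * p - b * g := by nlinarith
    have h : f * q - p * g ≤ |p * g - f * q| := neg_sub (p * g) (f * q) ▸ neg_le_abs _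
    have hsq : (a - b) ^ 2 ≤ (a * p - b * g) ^ 2 :=
      pow_le_pow_left₀ (sub_nonneg.2 hba) hdiff 2
    nlinarith [mul_le_mul_of_nonneg_left h hab, mul_le_mul_of_nonneg_left hfq hab]

theorem two_mul_add_le_Sobj (hb : 0 ≤ b) (hba : b ≤ a) (hp : 1 ≤ p) (hf : 1 ≤ f) (hq : 1 ≤ q)
    (hg : 0 ≤ g) : 2 * (a ^ 2 + b ^ 2) ≤ Sobj (a ^ 2) (b ^ 2) p f q g := by
  have hfq : a ^ 2 + b ^ 2 ≤ a ^ 2 * q ^ 2 + b ^ 2 * f ^ 2 := by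
    nlinarith [one_le_pow₀ (n := 2) hq, one_le_pow₀ (n := 2) hf, sq_nonneg a, sq_nonneg b]
  have hpg :=
    sq_add_sq_le_of_le_of_one_le_mul hb hba hp hg (one_le_mul_of_one_le_of_one_le hf hq)
  rw [Sobj_sq_sq (hb.trans hba) hb]
  linarith

end

/-- Minimization of `S = m_train p1² + m_test f1² + m_train q1² + m_test g1²
  + 2√(m_train m_test)|p1 g1 − f1 q1|` over `p1, f1, q1 ≥ 1`, `g1 ≥ 0`:
the minimum is `(√m_train + √m_test)²` when `m_test ≥ m_train`, and
`2(m_train + m_test)` when `m_test < m_train`. -/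
theorem min_Sobj (mtr mte : ℝ) (hmtr : 0 < mtr) (hmte : 0 < mte) :
    (mtr ≤ mte →
      IsLeast {x : ℝ | ∃ p1 f1 q1 g1 : ℝ, 1 ≤ p1 ∧ 1 ≤ f1 ∧ 1 ≤ q1 ∧ 0 ≤ g1 ∧
          x = Sobj mtr mte p1 f1 q1 g1}
        ((Real.sqrt mtr + Real.sqrt mte) ^ 2)) ∧
    (mte < mtr →
      IsLeast {x : ℝ | ∃ p1 f1 q1 g1 : ℝ, 1 ≤ p1 ∧ 1 ≤ f1 ∧ 1 ≤ q1 ∧ 0 ≤ g1 ∧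
          x = Sobj mtr mte p1 f1 q1 g1}
        (2 * (mtr + mte))) := by
  obtain ⟨a, ha, rfl⟩ : ∃ a, 0 < a ∧ a ^ 2 = mtr := ⟨√mtr, by positivity, Real.sq_sqrt hmtr.le⟩
  obtain ⟨b, hb, rfl⟩ : ∃ b, 0 < b ∧ b ^ 2 = mte := ⟨√mte, by positivity, Real.sq_sqrt hmte.le⟩
  rw [Real.sqrt_sq ha.le, Real.sqrt_sq hb.le]
  refine ⟨fun hle => ⟨?_, ?_⟩, fun hlt => ⟨?_, ?_⟩⟩
  · have hab : a / b ≤ 1 :=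
      div_le_one_of_le₀ ((pow_le_pow_iff_left₀ ha.le hb.le two_ne_zero).1 hle) hb.le
    refine ⟨1, 1, 1, a / b, le_rfl, le_rfl, le_rfl, by positivity, ?_⟩
    rw [Sobj_eq_sq_add_sq ha.le hb.le (by simpa using hab), mul_div_cancel₀ a hb.ne']
    ring
  · rintro x ⟨p, f, q, g, -, hf, hq, -, rfl⟩
    exact add_sq_le_Sobj ha.le hb.le hf hq
  · refine ⟨1, 1, 1, 1, le_rfl, le_rfl, le_rfl, zero_le_one, ?_⟩
    rw [Sobj_sq_sq ha.le hb.le, sub_self, abs_zero]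
    ring
  · rintro x ⟨p, f, q, g, hp, hf, hq, hg, rfl⟩
    exact two_mul_add_le_Sobj hb.le ((pow_lt_pow_iff_left₀ hb.le ha.le two_ne_zero).1 hlt).le
      hp hf hq hg
end
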